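/- arXiv:0809.1636 — 4 statements merged into one kernel-verified Lean document; each statement's English description precedes it below -/
import Mathlib

section
/- Let A > 0. There is a constant C depending only on A with the following property. Let k ≥ 16 be an integer, and let λ(p), λ(p²) be real numbers defined for each prime p satisfying the Hecke relation λ(p)² = λ(p²) + 1 and the Deligne bound |λ(p)| ≤ 2. Let L₁ > 0 be a real number such that exp( Σ_{p ≤ k} λ(p²)/p ) ≤ A (log log k)³ L₁. Then M := (1/((log k)² L₁)) · ∏_{p ≤ k} (1 + 2|λ(p)|/p) satisfies M ≤ C (log k)^{1/6} (log log k)^{9/2} L₁^{1/2}, where the product and sums run over primes p ≤ k. -/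
/-!
Since `1 + x ≤ exp x`, the product is at most `exp (∑ 2|λ(p)|/p)`. The AM-GM inequality
`2|x| ≤ (3/2) x² + 2/3` together with `λ(p)² = λ(p²) + 1` gives `2|λ(p)| ≤ (3/2) λ(p²) + 13/6`, so the
exponent is at most `(3/2) log (A (log log k)³ L₁) + (13/6) ∑_{p ≤ k} 1/p`, and Mertens' bound
`∑_{p ≤ k} 1/p ≤ log log k + O(1)` makes the product `≪ (A (log log k)³ L₁)^{3/2} (log k)^{13/6}`.
Mertens' bound follows by partial summation from `∑_{p ≤ n} log p / p ≤ log n + log 4`, which comes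
from Legendre's formula for `n!` and Chebyshev's bound `θ(n) ≤ n log 4`.
-/

open Finset Real
open scoped Nat

theorem Nat.prod_primesLE_pow_div_dvd_factorial (n : ℕ) :
    ∏ p ∈ primesLE n, p ^ (n / p) ∣ n ! := by
  refine Finset.prod_dvd_of_isRelPrime (fun p hp q hq hpq => ?_) fun p hp => ?_
  · have hcop := (coprime_primes (mem_primesLE.1 hp).2 (mem_primesLE.1 hq).2).2 hpq
    exact coprime_iff_isRelPrime.1 (hcop.pow _ _)
  · have hpn : p ≤ n := (mem_primesLE.1 hp).1
    have hp1 : 1 ≤ p := (mem_primesLE.1 hp).2.one_le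
    rw [(mem_primesLE.1 hp).2.pow_dvd_factorial_iff (lt_succ_of_le (log_le_self p n))]
    calc n / p = n / p ^ 1 := by rw [pow_one]
      _ ≤ ∑ i ∈ Ico 1 (n + 1), n / p ^ i :=
        single_le_sum (f := fun i => n / p ^ i) (fun _ _ => zero_le _) (by simp; omega)

theorem sum_primesLE_log_div_le (n : ℕ) :
    ∑ p ∈ n.primesLE, log p / p ≤ log n + log 4 := by
  rcases n.eq_zero_or_pos with rfl | hn
  · simp only [Nat.primesLE_zero, sum_empty, CharP.cast_eq_zero, log_zero, zero_add]
    positivity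
  have hfactorial : ∑ p ∈ n.primesLE, ((n / p : ℕ) : ℝ) * log p ≤ log (n ! : ℕ) := by
    have hpos : ∀ p ∈ n.primesLE, 0 < p := fun p hp => (Nat.mem_primesLE.1 hp).2.pos
    calc ∑ p ∈ n.primesLE, ((n / p : ℕ) : ℝ) * log p
        = log ((∏ p ∈ n.primesLE, p ^ (n / p) : ℕ) : ℝ) := by
          rw [Nat.cast_prod, log_prod fun p hp => by have := hpos p hp; positivity]
          simp only [Nat.cast_pow, Real.log_pow]
      _ ≤ log (n ! : ℕ) := by
          gcongr
          · exact_mod_cast prod_pos fun p hp => pow_pos (hpos p hp) _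
          · exact Nat.le_of_dvd n.factorial_pos n.prod_primesLE_pow_div_dvd_factorial
  have hn' : (0 : ℝ) < n := by exact_mod_cast hn
  rw [← mul_le_mul_iff_right₀ hn']
  calc (n : ℝ) * ∑ p ∈ n.primesLE, log p / p
      = ∑ p ∈ n.primesLE, (n : ℝ) / p * log p := by
        rw [mul_sum]; exact sum_congr rfl fun p _ => by ring
    _ ≤ ∑ p ∈ n.primesLE, (((n / p : ℕ) : ℝ) + 1) * log p := by
        gcongr with p hp
        rw [← Nat.floor_div_eq_div (K := ℝ)]
        exact (Nat.lt_floor_add_one _).le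
    _ = ∑ p ∈ n.primesLE, ((n / p : ℕ) : ℝ) * log p + Chebyshev.theta n := by
        rw [Chebyshev.theta_eq_sum_primesLE_log, ← sum_add_distrib]
        exact sum_congr rfl fun p _ => by ring
    _ ≤ log (n ! : ℕ) + log 4 * n := add_le_add hfactorial (Chebyshev.theta_le_log4_mul_x hn'.le)
    _ ≤ n * (log n + log 4) := by
        have : log (n ! : ℕ) ≤ n * log n := by
          rw [← Real.log_pow]
          gcongr
          exact_mod_cast Nat.factorial_le_pow n
        linarith

theorem Nat.sum_primesLE_succ {M : Type*} [AddCommMonoid M] (f : ℕ → M) (n : ℕ) :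
    ∑ p ∈ (n + 1).primesLE, f p
      = ∑ p ∈ n.primesLE, f p + if (n + 1).Prime then f (n + 1) else 0 := by
  rw [primesLE_succ]
  split_ifs
  · rw [sum_insert (notMem_primesLE n), add_comm]
  · rw [add_zero]

theorem inv_sub_inv_mul_add_le {a b : ℝ} (ha : 0 < a) (hb : 0 < b) (c : ℝ) :
    (a⁻¹ - b⁻¹) * (a + c) ≤ (log b - c / b) - (log a - c / a) := by
  have hlog := log_le_sub_one_of_pos (div_pos ha hb)
  rw [log_div ha.ne' hb.ne'] at hlog
  have hexpand : (a⁻¹ - b⁻¹) * (a + c) = 1 - a / b + (c / a - c / b) := by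
    field_simp
  linarith

/-- Partial summation against the weights `1 / log`: the main terms subtracted from `∑ 1/p`
make the increments `G(n) (1/log n - 1/log (n+1))`, with `G(n) = ∑_{p ≤ n} log p / p`. -/
noncomputable def mertensRemainder (n : ℕ) : ℝ :=
  ∑ p ∈ n.primesLE, (p : ℝ)⁻¹ - (∑ p ∈ n.primesLE, log p / p) / log n
    - (log (log n) - log 4 / log n)

theorem mertensRemainder_succ_le {n : ℕ} (hn : 2 ≤ n) :
    mertensRemainder (n + 1) ≤ mertensRemainder n := by
  have hlog : 0 < log n := log_pos (by exact_mod_cast hn)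
  have hlog_succ : 0 < log (n + 1 : ℕ) := log_pos (by exact_mod_cast (by omega : 1 < n + 1))
  have hincr : mertensRemainder (n + 1) - mertensRemainder n
      = (∑ p ∈ n.primesLE, log p / p) * ((log n)⁻¹ - (log (n + 1 : ℕ))⁻¹)
        - ((log (log (n + 1 : ℕ)) - log 4 / log (n + 1 : ℕ)) - (log (log n) - log 4 / log n)) := by
    simp only [mertensRemainder, Nat.sum_primesLE_succ]
    split_ifs <;> field_simp <;> ring
  have hcoeff : 0 ≤ (log n)⁻¹ - (log (n + 1 : ℕ))⁻¹ :=
    sub_nonneg.2 (inv_anti₀ hlog (log_le_log (by positivity) (by exact_mod_cast n.le_succ)))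
  have hweighted := mul_le_mul_of_nonneg_right (sum_primesLE_log_div_le n) hcoeff
  have hmain := inv_sub_inv_mul_add_le hlog hlog_succ (log 4)
  linarith

theorem mertensRemainder_two : mertensRemainder 2 = 2 - log (log 2) := by
  have h4 : log 4 = 2 * log 2 := by
    rw [show (4 : ℝ) = 2 ^ 2 by norm_num, Real.log_pow]; push_cast; ring
  have hlog2 : log 2 ≠ 0 := (log_pos one_lt_two).ne'
  have hprimes : Nat.primesLE 2 = {2} := by decide
  simp only [mertensRemainder, hprimes, sum_singleton, Nat.cast_ofNat, h4]
  field_simp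
  ring

theorem sum_primesLE_inv_le {n : ℕ} (hn : 2 ≤ n) :
    ∑ p ∈ n.primesLE, (p : ℝ)⁻¹ ≤ log (log n) + (3 - log (log 2)) := by
  have hremainder : mertensRemainder n ≤ mertensRemainder 2 :=
    Nat.le_induction le_rfl (fun m hm ih => (mertensRemainder_succ_le hm).trans ih) n hn
  have hlog : 0 < log n := log_pos (by exact_mod_cast hn)
  have hweighted : (∑ p ∈ n.primesLE, log p / p) / log n ≤ 1 + log 4 / log n := by
    rw [div_le_iff₀ hlog, add_mul, one_mul, div_mul_cancel₀ _ hlog.ne']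
    linarith [sum_primesLE_log_div_le n]
  rw [mertensRemainder_two, mertensRemainder] at hremainder
  linarith

theorem two_mul_abs_le_of_sq_eq_add_one {x y : ℝ} (h : x ^ 2 = y + 1) :
    2 * |x| ≤ 3 / 2 * y + 13 / 6 := by
  nlinarith [sq_nonneg (|x| - 2 / 3), sq_abs x]

theorem prod_one_add_two_abs_div_le_exp {s : Finset ℕ} {lam lam2 : ℕ → ℝ}
    (hH : ∀ p ∈ s, lam p ^ 2 = lam2 p + 1) :
    ∏ p ∈ s, (1 + 2 * |lam p| / p)
      ≤ exp (3 / 2 * ∑ p ∈ s, lam2 p / p + 13 / 6 * ∑ p ∈ s, (p : ℝ)⁻¹) := by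
  refine (prod_one_add_le_exp_sum s fun p => by positivity).trans (exp_le_exp.2 ?_)
  rw [mul_sum, mul_sum, ← sum_add_distrib]
  refine sum_le_sum fun p hp => ?_
  calc 2 * |lam p| / p ≤ (3 / 2 * lam2 p + 13 / 6) / p :=
        div_le_div_of_nonneg_right (two_mul_abs_le_of_sq_eq_add_one (hH p hp)) p.cast_nonneg
    _ = 3 / 2 * (lam2 p / p) + 13 / 6 * (p : ℝ)⁻¹ := by ring

theorem one_div_sq_mul_mul_exp_eq {ℓ A L : ℝ} (hℓ : 1 < ℓ) (hA : 0 < A) (hL : 0 < L) (c : ℝ) :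
    1 / (ℓ ^ 2 * L) * exp (3 / 2 * log (A * log ℓ ^ 3 * L) + 13 / 6 * (log ℓ + c))
      = A ^ ((3 : ℝ) / 2) * exp (13 / 6 * c) * ℓ ^ ((1 : ℝ) / 6)
          * log ℓ ^ ((9 : ℝ) / 2) * L ^ ((1 : ℝ) / 2) := by
  have hℓ0 : 0 < ℓ := by linarith
  have hX : 0 < log ℓ := log_pos hℓ
  rw [rpow_def_of_pos hA, rpow_def_of_pos hℓ0, rpow_def_of_pos hX, rpow_def_of_pos hL,
    one_div, ← exp_log (by positivity : 0 < ℓ ^ 2 * L), ← exp_neg]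
  simp only [← exp_add]
  congr 1
  rw [log_mul (by positivity) hL.ne', log_mul (by positivity) (by positivity),
    log_mul hA.ne' (by positivity), Real.log_pow, Real.log_pow]
  push_cast
  ring

/-- Lemma 3 of Holowinsky–Soundararajan (abstract form): if
`exp(Σ_{p ≤ k} λ(p²)/p) ≤ A (log log k)³ L₁`, then
`M = (1/((log k)² L₁)) ∏_{p ≤ k} (1 + 2|λ(p)|/p)` satisfies
`M ≤ C (log k)^{1/6} (log log k)^{9/2} L₁^{1/2}` with `C` depending only on `A`. -/
theorem lemma_three (A : ℝ) (hA : 0 < A) :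
    ∃ C : ℝ, ∀ (k : ℕ) (lam lam2 : ℕ → ℝ) (L₁ : ℝ),
      16 ≤ k →
      (∀ p : ℕ, p.Prime → (lam p) ^ 2 = lam2 p + 1) →
      (∀ p : ℕ, p.Prime → |lam p| ≤ 2) →
      0 < L₁ →
      Real.exp (∑ p ∈ (Finset.range (k + 1)).filter Nat.Prime, lam2 p / p)
        ≤ A * (Real.log (Real.log k)) ^ 3 * L₁ →
      (1 / ((Real.log k) ^ 2 * L₁)) *
          ∏ p ∈ (Finset.range (k + 1)).filter Nat.Prime, (1 + 2 * |lam p| / p)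
        ≤ C * (Real.log k) ^ ((1 : ℝ) / 6) *
            (Real.log (Real.log k)) ^ ((9 : ℝ) / 2) * L₁ ^ ((1 : ℝ) / 2) := by
  refine ⟨A ^ ((3 : ℝ) / 2) * exp (13 / 6 * (3 - log (log 2))), ?_⟩
  intro k lam lam2 L₁ hk hH _ hL hexp
  rw [← Nat.primesLE_eq_filter_range] at hexp ⊢
  have hlogk : 1 < log k := by
    rw [lt_log_iff_exp_lt (by positivity)]
    have : (16 : ℝ) ≤ k := by exact_mod_cast hk
    linarith [exp_one_lt_d9]
  have hlogk0 : 0 < log (log k) := log_pos hlogk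
  have hlam2 : ∑ p ∈ k.primesLE, lam2 p / p ≤ log (A * log (log k) ^ 3 * L₁) :=
    (le_log_iff_exp_le (by positivity)).2 hexp
  have hinv := sum_primesLE_inv_le (n := k) (by omega)
  rw [← one_div_sq_mul_mul_exp_eq hlogk hA hL]
  gcongr
  exact (prod_one_add_two_abs_div_le_exp fun p hp => hH p (Nat.mem_primesLE.1 hp).2).trans
    (exp_le_exp.2 (by linarith))
end

section
/- Let c > 0 and A > 0. There is a constant C depending only on A with the following property. Let k ≥ 16 be an integer, and let (ρ_j)_{j∈J} be a countable family of complex numbers, ρ_j = β_j + iγ_j, such that 0 ≤ β_j ≤ 1 and β_j ≤ 1 − c/log(k(1+|γ_j|)) for every j, and such that for every integer n ≥ 0 the number of indices j with n ≤ |γ_j| < n+1 is at most A·log(k(2+n)). Then for every σ ∈ [1, 5/4] and every real x ≥ 2, Σ_j x^{β_j − σ} / (|ρ_j − σ| · |ρ_j − σ + 2|) ≤ C ( x^{−c/(2 log k)} (log k)² + 1 ). -/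
/-!
Group the zeros by `n = ⌊|γ|⌋₊`. Both `‖ρ - σ‖` and `‖ρ - σ + 2‖` are at least `|γ|`, so for
`n ≥ 1` a term is at most `x ^ (β - σ) / n ^ 2`. While `1 + |γ| ≤ k` the zero-free region gives
`β ≤ 1 - c / (2 log k)`, hence `x ^ (β - σ) ≤ x ^ (-c / (2 log k))`. This handles `|γ| < 1`, where
the denominator is at least `(c / (2 log k)) · (3 / 4)` instead, and `n + 2 ≤ k`, where the at most
`2 A log k` zeros contribute `O(x ^ (-c / (2 log k)) log k / n ^ 2)`. For `n + 2 > k` the trivial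
bound `x ^ (β - σ) ≤ 1` and `log (k (2 + n)) ≤ 2 log (2 + n) = O(√n)` give `O(n ^ (-3/2))`, which
is summable.
-/

open Real Finset

theorem Finset.sum_le_tsum_of_sum_fiber_le {ι J : Type*} [DecidableEq ι] {S : Finset J}
    {g : J → ι} {f : J → ℝ} {b : ι → ℝ} (hb : Summable b) (hb0 : ∀ i, 0 ≤ b i)
    (h : ∀ i, ∑ j ∈ S with g j = i, f j ≤ b i) : ∑ j ∈ S, f j ≤ ∑' i, b i :=
  calc ∑ j ∈ S, f j = ∑ i ∈ S.image g, ∑ j ∈ S with g j = i, f j :=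
        (sum_fiberwise_of_maps_to (fun _ hj ↦ mem_image_of_mem g hj) f).symm
    _ ≤ ∑ i ∈ S.image g, b i := sum_le_sum fun i _ ↦ h i
    _ ≤ ∑' i, b i := hb.sum_le_tsum _ fun i _ ↦ hb0 i

theorem Finset.sum_le_mul_of_card_le {J : Type*} {s : Finset J} {f : J → ℝ} {N M : ℝ}
    (hN : (#s : ℝ) ≤ N) (hM : 0 ≤ M) (hf : ∀ j ∈ s, f j ≤ M) : ∑ j ∈ s, f j ≤ N * M :=
  (s.sum_le_card_nsmul f M hf).trans <| by
    rw [nsmul_eq_mul]; exact mul_le_mul_of_nonneg_right hN hM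

theorem Complex.sq_im_le_norm_mul_norm_add_two (w : ℂ) : w.im ^ 2 ≤ ‖w‖ * ‖w + 2‖ := by
  have h := abs_im_le_norm (w + 2)
  rw [add_im, im_ofNat, add_zero] at h
  rw [← sq_abs, sq]
  exact mul_le_mul (abs_im_le_norm w) h (abs_nonneg _) (norm_nonneg _)

theorem Complex.abs_re_mul_abs_re_add_two_le (w : ℂ) : |w.re| * |w.re + 2| ≤ ‖w‖ * ‖w + 2‖ := by
  have h := abs_re_le_norm (w + 2)
  rw [add_re, re_ofNat] at h
  exact mul_le_mul (abs_re_le_norm w) h (abs_nonneg _) (norm_nonneg _)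

theorem Real.one_le_log_of_three_le {k : ℝ} (hk : 3 ≤ k) : 1 ≤ log k := by
  rw [le_log_iff_exp_le (by linarith)]
  linarith [exp_one_lt_d9]

theorem Real.log_mul_le_two_mul_log {a b : ℝ} (ha : 0 < a) (hab : a ≤ b) :
    log (b * a) ≤ 2 * log b := by
  rw [log_mul (ha.trans_le hab).ne' ha.ne', two_mul]
  gcongr

theorem Real.log_two_add_le_four_mul_sqrt {y : ℝ} (hy : 1 ≤ y) : log (2 + y) ≤ 4 * √y := by
  have hlog : log (2 + y) ≤ 2 * √(2 + y) := by
    have := log_le_rpow_div (x := 2 + y) (by linarith) (one_half_pos)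
    rwa [← sqrt_eq_rpow, div_eq_mul_inv, inv_div, div_one, mul_comm] at this
  have hsqrt : √(2 + y) ≤ 2 * √y := by
    rw [sqrt_le_iff, mul_pow, sq_sqrt (by linarith)]
    constructor <;> [positivity; linarith]
  linarith

theorem Real.sqrt_div_sq_eq_rpow {y : ℝ} (hy : 0 < y) : √y / y ^ 2 = y ^ (-(3 / 2) : ℝ) := by
  rw [sqrt_eq_rpow, ← rpow_two, ← rpow_sub hy]
  norm_num

theorem re_le_one_sub_div_two_log {c k t β : ℝ} (hc : 0 ≤ c) (hk : 1 < k) (ht : 0 ≤ t)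
    (htk : 1 + t ≤ k) (hβ : β ≤ 1 - c / log (k * (1 + t))) : β ≤ 1 - c / (2 * log k) := by
  have hpos : 0 < log (k * (1 + t)) := log_pos (by nlinarith)
  have := div_le_div_of_nonneg_left hc hpos (log_mul_le_two_mul_log (by linarith) htk)
  linarith

theorem rpow_re_sub_le_of_zeroFree {c k x σ : ℝ} {ρ : ℂ} (hc : 0 ≤ c) (hk : 1 < k)
    (hβ : ρ.re ≤ 1 - c / log (k * (1 + |ρ.im|))) (hγ : 1 + |ρ.im| ≤ k) (hσ : 1 ≤ σ)
    (hx : 1 ≤ x) : x ^ (ρ.re - σ) ≤ x ^ (-c / (2 * log k)) := by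
  have := re_le_one_sub_div_two_log hc hk (abs_nonneg _) hγ hβ
  gcongr
  rw [neg_div]; linarith

noncomputable def zeroTerm (x σ : ℝ) (ρ : ℂ) : ℝ := x ^ (ρ.re - σ) / (‖ρ - σ‖ * ‖ρ - σ + 2‖)

section ZeroTerm

variable {x σ : ℝ} {ρ : ℂ}

theorem zeroTerm_le_div_sq (hx : 0 ≤ x) {y : ℝ} (hy : 0 < y) (h : y ≤ |ρ.im|) :
    zeroTerm x σ ρ ≤ x ^ (ρ.re - σ) / y ^ 2 := by
  have hden : y ^ 2 ≤ ‖ρ - σ‖ * ‖ρ - σ + 2‖ := by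
    calc y ^ 2 ≤ |ρ.im| ^ 2 := by gcongr
      _ = (ρ - σ).im ^ 2 := by simp
      _ ≤ _ := Complex.sq_im_le_norm_mul_norm_add_two _
  exact div_le_div_of_nonneg_left (rpow_nonneg hx _) (by positivity) hden

theorem zeroTerm_le_of_abs_im_lt_one {c k : ℝ} (hc : 0 < c) (hk : 2 ≤ k) (hβ0 : 0 ≤ ρ.re)
    (hβ : ρ.re ≤ 1 - c / log (k * (1 + |ρ.im|))) (hγ : |ρ.im| < 1) (hσ1 : 1 ≤ σ)
    (hσ2 : σ ≤ 5 / 4) (hx : 1 ≤ x) :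
    zeroTerm x σ ρ ≤ x ^ (-c / (2 * log k)) * (8 * log k / (3 * c)) := by
  have hL : 0 < log k := log_pos (by linarith)
  have hβ' := re_le_one_sub_div_two_log hc.le (by linarith) (abs_nonneg _) (by linarith) hβ
  have hδ : 0 < c / (2 * log k) * (3 / 4) := by positivity
  have hden : c / (2 * log k) * (3 / 4) ≤ ‖ρ - σ‖ * ‖ρ - σ + 2‖ := by
    calc c / (2 * log k) * (3 / 4) ≤ |(ρ - σ).re| * |(ρ - σ).re + 2| := by
          simp only [Complex.sub_re, Complex.ofReal_re]
          rw [abs_of_nonpos (by linarith), abs_of_nonneg (by linarith)]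
          gcongr <;> linarith
      _ ≤ _ := Complex.abs_re_mul_abs_re_add_two_le _
  calc zeroTerm x σ ρ ≤ x ^ (ρ.re - σ) / (c / (2 * log k) * (3 / 4)) :=
        div_le_div_of_nonneg_left (rpow_nonneg (by linarith) _) hδ hden
    _ ≤ x ^ (-c / (2 * log k)) / (c / (2 * log k) * (3 / 4)) :=
        div_le_div_of_nonneg_right
          (rpow_re_sub_le_of_zeroFree hc.le (by linarith) hβ (by linarith) hσ1 hx) hδ.le
    _ = x ^ (-c / (2 * log k)) * (8 * log k / (3 * c)) := by
        field_simp
        ring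

end ZeroTerm

noncomputable def mainWeight (A c : ℝ) (n : ℕ) : ℝ :=
  (if n = 0 then 16 * A / (3 * c) else 0) + 2 * A * ((n : ℝ) ^ 2)⁻¹

noncomputable def tailWeight (A : ℝ) (n : ℕ) : ℝ := 8 * A * (n : ℝ) ^ (-(3 / 2) : ℝ)

theorem mainWeight_nonneg {A c : ℝ} (hA : 0 ≤ A) (hc : 0 ≤ c) (n : ℕ) :
    0 ≤ mainWeight A c n := by
  unfold mainWeight; split_ifs <;> positivity

theorem tailWeight_nonneg {A : ℝ} (hA : 0 ≤ A) (n : ℕ) : 0 ≤ tailWeight A n := by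
  unfold tailWeight; positivity

theorem summable_mainWeight (A c : ℝ) : Summable (mainWeight A c) :=
  (hasSum_ite_eq 0 _).summable.add ((Real.summable_nat_pow_inv.2 one_lt_two).mul_left _)

theorem summable_tailWeight (A : ℝ) : Summable (tailWeight A) :=
  (Real.summable_nat_rpow.2 (by norm_num)).mul_left _

section Fiber

variable {c A k x σ : ℝ} {J : Type*} {ρ : J → ℂ} {s : Finset J}

theorem sum_zeroTerm_le_of_abs_im_lt_one (hc : 0 < c) (hA : 0 ≤ A) (hk : 2 ≤ k)
    (hβ : ∀ j ∈ s, 0 ≤ (ρ j).re ∧ (ρ j).re ≤ 1 - c / log (k * (1 + |(ρ j).im|)))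
    (hγ : ∀ j ∈ s, |(ρ j).im| < 1) (hcard : (#s : ℝ) ≤ A * log (k * 2))
    (hσ1 : 1 ≤ σ) (hσ2 : σ ≤ 5 / 4) (hx : 1 ≤ x) :
    ∑ j ∈ s, zeroTerm x σ (ρ j) ≤ x ^ (-c / (2 * log k)) * log k ^ 2 * (16 * A / (3 * c)) := by
  have hcard' : (#s : ℝ) ≤ 2 * A * log k := by
    nlinarith [log_mul_le_two_mul_log two_pos hk]
  calc ∑ j ∈ s, zeroTerm x σ (ρ j)
      ≤ 2 * A * log k * (x ^ (-c / (2 * log k)) * (8 * log k / (3 * c))) :=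
        sum_le_mul_of_card_le hcard' (by have := log_pos (by linarith : 1 < k); positivity)
          fun j hj ↦ zeroTerm_le_of_abs_im_lt_one hc (by linarith) (hβ j hj).1 (hβ j hj).2
            (hγ j hj) hσ1 hσ2 hx
    _ = x ^ (-c / (2 * log k)) * log k ^ 2 * (16 * A / (3 * c)) := by
        field_simp
        ring

theorem sum_zeroTerm_le_of_add_two_le {n : ℕ} (hn : 1 ≤ n) (hc : 0 < c) (hA : 0 ≤ A)
    (hk : 3 ≤ k)
    (hβ : ∀ j ∈ s, (ρ j).re ≤ 1 - c / log (k * (1 + |(ρ j).im|)))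
    (hγ : ∀ j ∈ s, n ≤ |(ρ j).im| ∧ |(ρ j).im| < n + 1) (hnk : n + 2 ≤ k)
    (hcard : (#s : ℝ) ≤ A * log (k * (2 + n))) (hσ1 : 1 ≤ σ) (hx : 1 ≤ x) :
    ∑ j ∈ s, zeroTerm x σ (ρ j) ≤
      x ^ (-c / (2 * log k)) * log k ^ 2 * (2 * A * ((n : ℝ) ^ 2)⁻¹) := by
  have hn' : (1 : ℝ) ≤ n := by exact_mod_cast hn
  have hL : 1 ≤ log k := one_le_log_of_three_le hk
  have hcard' : (#s : ℝ) ≤ 2 * A * log k := by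
    nlinarith [log_mul_le_two_mul_log (by linarith : (0 : ℝ) < 2 + n)
      (by linarith : 2 + (n : ℝ) ≤ k)]
  calc ∑ j ∈ s, zeroTerm x σ (ρ j)
      ≤ 2 * A * log k * (x ^ (-c / (2 * log k)) / (n : ℝ) ^ 2) :=
        sum_le_mul_of_card_le hcard' (by positivity) fun j hj ↦
          (zeroTerm_le_div_sq (by linarith) (by linarith) (hγ j hj).1).trans <|
            div_le_div_of_nonneg_right (rpow_re_sub_le_of_zeroFree hc.le (by linarith) (hβ j hj)
              (by linarith [(hγ j hj).2]) hσ1 hx) (by positivity)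
    _ ≤ x ^ (-c / (2 * log k)) * log k ^ 2 * (2 * A * ((n : ℝ) ^ 2)⁻¹) := by
        have : 0 ≤ x ^ (-c / (2 * log k)) := rpow_nonneg (by linarith) _
        calc 2 * A * log k * (x ^ (-c / (2 * log k)) / (n : ℝ) ^ 2)
            = x ^ (-c / (2 * log k)) * log k * (2 * A * ((n : ℝ) ^ 2)⁻¹) := by ring
          _ ≤ x ^ (-c / (2 * log k)) * log k ^ 2 * (2 * A * ((n : ℝ) ^ 2)⁻¹) := by
            gcongr
            nlinarith

theorem sum_zeroTerm_le_of_le_add_two {n : ℕ} (hn : 1 ≤ n) (hA : 0 ≤ A) (hk : 0 < k)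
    (hβ : ∀ j ∈ s, (ρ j).re ≤ 1) (hγ : ∀ j ∈ s, n ≤ |(ρ j).im|) (hnk : k ≤ n + 2)
    (hcard : (#s : ℝ) ≤ A * log (k * (2 + n))) (hσ1 : 1 ≤ σ) (hx : 1 ≤ x) :
    ∑ j ∈ s, zeroTerm x σ (ρ j) ≤ tailWeight A n := by
  have hn' : (1 : ℝ) ≤ n := by exact_mod_cast hn
  have hcard' : (#s : ℝ) ≤ 2 * A * log (2 + n) := by
    rw [mul_comm k] at hcard
    nlinarith [log_mul_le_two_mul_log hk (by linarith : k ≤ 2 + n)]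
  calc ∑ j ∈ s, zeroTerm x σ (ρ j)
      ≤ 2 * A * log (2 + n) * (1 / (n : ℝ) ^ 2) :=
        sum_le_mul_of_card_le hcard' (by positivity) fun j hj ↦
          (zeroTerm_le_div_sq (by linarith) (by linarith) (hγ j hj)).trans <| by
            gcongr
            exact rpow_le_one_of_one_le_of_nonpos hx (by linarith [hβ j hj])
    _ ≤ 2 * A * (4 * √n) * (1 / (n : ℝ) ^ 2) := by
        gcongr
        exact log_two_add_le_four_mul_sqrt hn'
    _ = tailWeight A n := by
        rw [tailWeight, ← sqrt_div_sq_eq_rpow (by linarith)]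
        ring

end Fiber

theorem sum_fiber_zeroTerm_le {c A k x σ : ℝ} {J : Type*} {ρ : J → ℂ} (hc : 0 < c) (hA : 0 ≤ A)
    (hk : 3 ≤ k)
    (hβ : ∀ j, 0 ≤ (ρ j).re ∧ (ρ j).re ≤ 1 ∧ (ρ j).re ≤ 1 - c / log (k * (1 + |(ρ j).im|)))
    (S : Finset J) (n : ℕ)
    (hcount : {j | (n : ℝ) ≤ |(ρ j).im| ∧ |(ρ j).im| < n + 1}.Finite ∧
      ({j | (n : ℝ) ≤ |(ρ j).im| ∧ |(ρ j).im| < n + 1}.ncard : ℝ) ≤ A * log (k * (2 + n)))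
    (hσ1 : 1 ≤ σ) (hσ2 : σ ≤ 5 / 4) (hx : 1 ≤ x) :
    ∑ j ∈ S with ⌊|(ρ j).im|⌋₊ = n, zeroTerm x σ (ρ j) ≤
      x ^ (-c / (2 * log k)) * log k ^ 2 * mainWeight A c n + tailWeight A n := by
  set s := {j ∈ S | ⌊|(ρ j).im|⌋₊ = n}
  have hγ : ∀ j ∈ s, n ≤ |(ρ j).im| ∧ |(ρ j).im| < n + 1 :=
    fun j hj ↦ (Nat.floor_eq_iff (abs_nonneg _)).1 (mem_filter.1 hj).2
  have hcard : (#s : ℝ) ≤ A * log (k * (2 + n)) := by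
    refine le_trans ?_ hcount.2
    rw [← Set.ncard_coe_finset]
    exact_mod_cast Set.ncard_le_ncard (fun j hj ↦ hγ j hj) hcount.1
  have hM : 0 ≤ x ^ (-c / (2 * log k)) * log k ^ 2 := by positivity
  rcases Nat.eq_zero_or_pos n with rfl | hn
  · have hsum := sum_zeroTerm_le_of_abs_im_lt_one hc hA (by linarith)
      (fun j _ ↦ ⟨(hβ j).1, (hβ j).2.2⟩) (fun j hj ↦ by simpa using (hγ j hj).2) (by simpa using hcard) hσ1 hσ2 hx
    have : 16 * A / (3 * c) ≤ mainWeight A c 0 := le_add_of_nonneg_right (by positivity)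
    nlinarith [tailWeight_nonneg hA 0]
  rcases le_or_gt ((n : ℝ) + 2) k with hnk | hnk
  · have hsum := sum_zeroTerm_le_of_add_two_le hn hc hA hk (fun j _ ↦ (hβ j).2.2) hγ hnk hcard
      hσ1 hx
    have : 2 * A * ((n : ℝ) ^ 2)⁻¹ ≤ mainWeight A c n :=
      le_add_of_nonneg_left (by split_ifs <;> positivity)
    nlinarith [tailWeight_nonneg hA n]
  · have hsum := sum_zeroTerm_le_of_le_add_two hn hA (by linarith) (fun j _ ↦ (hβ j).2.1)
      (fun j hj ↦ (hγ j hj).1) hnk.le hcard hσ1 hx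
    nlinarith [mainWeight_nonneg hA hc.le n]

/-- Bound on the sum over nontrivial zeros in the proof of Lemma 2 of
Holowinsky–Soundararajan: for a countable family `ρ_j = β_j + iγ_j` with
`0 ≤ β_j ≤ 1`, `β_j ≤ 1 − c/log(k(1+|γ_j|))`, and at most `A log(k(2+n))`
indices with `n ≤ |γ_j| < n+1` for each `n`, one has (uniformly over finite
subfamilies, i.e. the sum converges and is so bounded)
`Σ_j x^{β_j−σ}/(|ρ_j−σ||ρ_j−σ+2|) ≤ C (x^{−c/(2 log k)} (log k)² + 1)`. -/
theorem zero_sum_bound (c A : ℝ) (hc : 0 < c) (hA : 0 < A) :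
    ∃ C : ℝ, ∀ (k : ℕ) (J : Type) (_ : Countable J) (ρ : J → ℂ),
      16 ≤ k →
      (∀ j : J, 0 ≤ (ρ j).re ∧ (ρ j).re ≤ 1 ∧
        (ρ j).re ≤ 1 - c / Real.log (k * (1 + |(ρ j).im|))) →
      (∀ n : ℕ,
        {j : J | (n : ℝ) ≤ |(ρ j).im| ∧ |(ρ j).im| < n + 1}.Finite ∧
        ({j : J | (n : ℝ) ≤ |(ρ j).im| ∧ |(ρ j).im| < n + 1}.ncard : ℝ)
          ≤ A * Real.log (k * (2 + n))) →
      ∀ (σ : ℝ), 1 ≤ σ → σ ≤ 5 / 4 → ∀ (x : ℝ), 2 ≤ x →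
        ∀ S : Finset J,
          ∑ j ∈ S, x ^ ((ρ j).re - σ) /
              (‖ρ j - σ‖ * ‖ρ j - σ + 2‖)
            ≤ C * (x ^ (-c / (2 * Real.log k)) * (Real.log k) ^ 2 + 1) := by
  refine ⟨∑' n, mainWeight A c n + ∑' n, tailWeight A n, ?_⟩
  intro k J _ ρ hk hβ hcount σ hσ1 hσ2 x hx S
  set M := x ^ (-c / (2 * log k)) * log k ^ 2
  have hM : 0 ≤ M := by positivity
  have hk3 : (3 : ℝ) ≤ k := by exact_mod_cast (by omega : 3 ≤ k)
  have hu : 0 ≤ ∑' n, mainWeight A c n := tsum_nonneg (mainWeight_nonneg hA.le hc.le)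
  have hv : 0 ≤ ∑' n, tailWeight A n := tsum_nonneg (tailWeight_nonneg hA.le)
  calc ∑ j ∈ S, zeroTerm x σ (ρ j)
      ≤ ∑' n, (M * mainWeight A c n + tailWeight A n) :=
        sum_le_tsum_of_sum_fiber_le (((summable_mainWeight A c).mul_left M).add
          (summable_tailWeight A))
          (fun n ↦ add_nonneg (mul_nonneg hM (mainWeight_nonneg hA.le hc.le n))
            (tailWeight_nonneg hA.le n))
          fun n ↦ sum_fiber_zeroTerm_le hc hA.le hk3 hβ S n (hcount n) hσ1 hσ2 (by linarith)
    _ = M * ∑' n, mainWeight A c n + ∑' n, tailWeight A n := by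
        rw [((summable_mainWeight A c).mul_left M).tsum_add (summable_tailWeight A),
          tsum_mul_left]
    _ ≤ (∑' n, mainWeight A c n + ∑' n, tailWeight A n) * (M + 1) := by nlinarith
end

section
/- Let 0 < ε ≤ 1/100 and let C₁, C₂, C₃ > 0. There are constants C and k₀ (depending only on ε, C₁, C₂, C₃) with the following property. For every integer k ≥ k₀ and all real numbers I ≥ 0, M ≥ 0, L₁ > 0 satisfying (a) I ≤ C₁ (log k)^{ε} M^{1/2}, (b) I ≤ C₂ (log k)^{−1/2+ε} / L₁, and (c) M ≤ C₃ (log k)^{1/6} (log log k)^{9/2} L₁^{1/2}, one has I ≤ C (log k)^{−1/30 + 2ε}. -/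
/-!
Hypotheses (a) and (c), with `log log k ≪_ε (log k)^{4ε/9}`, give
`I ≪ (log k)^{1/12 + 2ε} L₁^{1/4}`, a bound increasing in `L₁`, while (b) gives the bound
`I ≪ (log k)^{-1/2 + ε} / L₁`, decreasing in `L₁`. Hence `I` is at most the larger of the two
bounds evaluated at the crossover `L₁ = (log k)^{-7/15}`, and both are `≪ (log k)^{-1/30 + 2ε}`.
-/

open Real

theorem le_max_of_le_div_of_le_mul_rpow {I X Y t τ p : ℝ} (hX : 0 ≤ X) (hY : 0 ≤ Y)
    (ht : 0 < t) (hτ : 0 < τ) (hp : 0 ≤ p) (hIX : I ≤ X / t) (hIY : I ≤ Y * t ^ p) :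
    I ≤ max (X / τ) (Y * τ ^ p) := by
  rcases le_total τ t with h | h
  · exact le_max_of_le_left (hIX.trans (div_le_div_of_nonneg_left hX hτ h))
  · exact le_max_of_le_right (hIY.trans (by gcongr))

theorem Real.log_rpow_le {x a ε : ℝ} (hx : 1 ≤ x) (ha : 0 < a) (hε : 0 < ε) :
    log x ^ a ≤ (a / ε) ^ a * x ^ ε := by
  have hlog : log x ≤ x ^ (ε / a) * (a / ε) := by
    simpa [div_eq_mul_inv, mul_comm] using log_le_rpow_div (by linarith) (div_pos hε ha)
  calc log x ^ a ≤ (x ^ (ε / a) * (a / ε)) ^ a := rpow_le_rpow (log_nonneg hx) hlog ha.le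
    _ = (a / ε) ^ a * x ^ ε := by
      rw [mul_rpow (by positivity) (by positivity), ← rpow_mul (by linarith),
        div_mul_cancel₀ _ ha.ne', mul_comm]

theorem Real.one_le_log_of_three_le_s12 {x : ℝ} (hx : 3 ≤ x) : 1 ≤ log x := by
  rw [le_log_iff_exp_le (by linarith)]
  linarith [exp_one_lt_three]

theorem holowinsky_bound_le_mul_rpow_quarter {ε C₁ C₃ L I M L₁ : ℝ} (hε : 0 < ε)
    (hC₁ : 0 ≤ C₁) (hC₃ : 0 ≤ C₃) (hL : 1 ≤ L) (hL₁ : 0 ≤ L₁)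
    (ha : I ≤ C₁ * L ^ ε * M ^ (1 / 2 : ℝ))
    (hc : M ≤ C₃ * L ^ (1 / 6 : ℝ) * log L ^ (9 / 2 : ℝ) * L₁ ^ (1 / 2 : ℝ)) :
    I ≤ C₁ * C₃ ^ (1 / 2 : ℝ) * (9 / (4 * ε)) ^ (9 / 4 : ℝ) * L ^ (1 / 12 + 2 * ε) *
      L₁ ^ (1 / 4 : ℝ) := by
  have hL0 : 0 < L := by linarith
  set Z := C₃ ^ (1 / 2 : ℝ) * (9 / (4 * ε)) ^ (9 / 4 : ℝ) * L ^ (1 / 12 + ε) * L₁ ^ (1 / 4 : ℝ)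
  have hMZ : M ≤ Z ^ 2 := by
    have hloglog := log_rpow_le hL (by norm_num : (0 : ℝ) < 9 / 2) (by positivity : 0 < 2 * ε)
    calc M ≤ C₃ * L ^ (1 / 6 : ℝ) * log L ^ (9 / 2 : ℝ) * L₁ ^ (1 / 2 : ℝ) := hc
      _ ≤ C₃ * L ^ (1 / 6 : ℝ) * ((9 / 2 / (2 * ε)) ^ (9 / 2 : ℝ) * L ^ (2 * ε)) *
          L₁ ^ (1 / 2 : ℝ) := by gcongr
      _ = Z ^ 2 := by
        simp only [Z, mul_pow, ← rpow_mul_natCast hC₃, ← rpow_mul_natCast hL0.le,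
          ← rpow_mul_natCast hL₁, ← rpow_mul_natCast (by positivity : (0 : ℝ) ≤ 9 / (4 * ε))]
        rw [show (9 / 2 / (2 * ε)) = 9 / (4 * ε) by ring,
          show (1 / 12 + ε) * ((2 : ℕ) : ℝ) = 1 / 6 + 2 * ε by push_cast; ring, rpow_add hL0]
        norm_num only [Nat.cast_ofNat, rpow_one]
        ring
  have hMhalf : M ^ (1 / 2 : ℝ) ≤ Z := by
    rw [← sqrt_eq_rpow, sqrt_le_left (by positivity)]
    exact hMZ
  calc I ≤ C₁ * L ^ ε * Z := ha.trans (by gcongr)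
    _ = _ := by
      rw [show 1 / 12 + 2 * ε = ε + (1 / 12 + ε) by ring, rpow_add hL0 ε (1 / 12 + ε)]
      ring

theorem le_rpow_of_holowinsky_soundararajan {ε C₁ C₂ C₃ L I M L₁ : ℝ} (hε : 0 < ε)
    (hC₁ : 0 ≤ C₁) (hC₂ : 0 ≤ C₂) (hC₃ : 0 ≤ C₃) (hL : 1 ≤ L) (hL₁ : 0 < L₁)
    (ha : I ≤ C₁ * L ^ ε * M ^ (1 / 2 : ℝ))
    (hb : I ≤ C₂ * L ^ (-(1 : ℝ) / 2 + ε) / L₁)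
    (hc : M ≤ C₃ * L ^ (1 / 6 : ℝ) * log L ^ (9 / 2 : ℝ) * L₁ ^ (1 / 2 : ℝ)) :
    I ≤ max C₂ (C₁ * C₃ ^ (1 / 2 : ℝ) * (9 / (4 * ε)) ^ (9 / 4 : ℝ)) *
      L ^ (-(1 : ℝ) / 30 + 2 * ε) := by
  have hL0 : 0 < L := by linarith
  set K := C₁ * C₃ ^ (1 / 2 : ℝ) * (9 / (4 * ε)) ^ (9 / 4 : ℝ)
  have hI := le_max_of_le_div_of_le_mul_rpow (τ := L ^ (-(7 : ℝ) / 15)) (by positivity)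
    (by positivity) hL₁ (by positivity) (by norm_num) hb
    (holowinsky_bound_le_mul_rpow_quarter hε hC₁ hC₃ hL hL₁.le ha hc)
  rw [mul_div_assoc, ← rpow_sub hL0, ← rpow_mul hL0.le, mul_assoc, ← rpow_add hL0] at hI
  refine hI.trans (max_le ?_ ?_)
  · calc C₂ * L ^ (-1 / 2 + ε - -7 / 15) ≤ C₂ * L ^ (-(1 : ℝ) / 30 + 2 * ε) := by
          gcongr
          linarith
      _ ≤ _ := by gcongr; exact le_max_left _ _
  · calc K * L ^ (1 / 12 + 2 * ε + -7 / 15 * (1 / 4)) = K * L ^ (-(1 : ℝ) / 30 + 2 * ε) := by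
          ring_nf
      _ ≤ _ := by gcongr; exact le_max_right _ _

theorem deduce_theorem_one_i_general (ε C₁ C₂ C₃ : ℝ) (hε : 0 < ε)
    (hC₁ : 0 < C₁) (hC₂ : 0 < C₂) (hC₃ : 0 < C₃) :
    ∃ C : ℝ, ∃ k₀ : ℕ, ∀ k : ℕ, k₀ ≤ k → ∀ I M L₁ : ℝ,
      0 ≤ I → 0 ≤ M → 0 < L₁ →
      I ≤ C₁ * (Real.log k) ^ ε * M ^ ((1 : ℝ) / 2) →
      I ≤ C₂ * (Real.log k) ^ (-(1 : ℝ) / 2 + ε) / L₁ →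
      M ≤ C₃ * (Real.log k) ^ ((1 : ℝ) / 6) *
            (Real.log (Real.log k)) ^ ((9 : ℝ) / 2) * L₁ ^ ((1 : ℝ) / 2) →
      I ≤ C * (Real.log k) ^ (-(1 : ℝ) / 30 + 2 * ε) := by
  refine ⟨_, 3, fun k hk I M L₁ _ _ hL₁ ha hb hc =>
    le_rpow_of_holowinsky_soundararajan hε hC₁.le hC₂.le hC₃.le
      (one_le_log_of_three_le_s12 ?_) hL₁ ha hb hc⟩
  exact_mod_cast hk

/-- Deduction of Theorem 1(i) of Holowinsky–Soundararajan from
Holowinsky's Theorem 2(i) (hypothesis (a)), Soundararajan's Theorem 3(i)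
(hypothesis (b)) and Lemma 3 (hypothesis (c)):
`I ≤ C (log k)^{−1/30+2ε}`. -/
theorem deduce_theorem_one_i (ε C₁ C₂ C₃ : ℝ) (hε : 0 < ε) (hε' : ε ≤ 1 / 100)
    (hC₁ : 0 < C₁) (hC₂ : 0 < C₂) (hC₃ : 0 < C₃) :
    ∃ C : ℝ, ∃ k₀ : ℕ, ∀ k : ℕ, k₀ ≤ k → ∀ I M L₁ : ℝ,
      0 ≤ I → 0 ≤ M → 0 < L₁ →
      I ≤ C₁ * (Real.log k) ^ ε * M ^ ((1 : ℝ) / 2) →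
      I ≤ C₂ * (Real.log k) ^ (-(1 : ℝ) / 2 + ε) / L₁ →
      M ≤ C₃ * (Real.log k) ^ ((1 : ℝ) / 6) *
            (Real.log (Real.log k)) ^ ((9 : ℝ) / 2) * L₁ ^ ((1 : ℝ) / 2) →
      I ≤ C * (Real.log k) ^ (-(1 : ℝ) / 30 + 2 * ε) :=
  deduce_theorem_one_i_general ε C₁ C₂ C₃ hε hC₁ hC₂ hC₃
end

section
/- Let 0 < ε ≤ 1/100 and let C₀, C₁, C₂, C₃ > 0. There are constants C and k₀ (depending only on ε, C₀, C₁, C₂, C₃) with the following property. For every integer k ≥ k₀ and all real numbers I ≥ 0, M ≥ 0, R ≥ 0, L₁ > 0 satisfying (a) I ≤ C₁ (log k)^{ε} M^{1/2} (1 + R), (b) R ≤ C₀ (log k)^{ε}, (c) I ≤ C₂ (log k)^{−1+ε} / L₁, and (d) M ≤ C₃ (log k)^{1/6} (log log k)^{9/2} L₁^{1/2}, one has I ≤ C (log k)^{−2/15 + 3ε}. -/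
/-!
Write `L = log k`. If `L(1, sym² f) ≥ L^{-13/15}`, Soundararajan's bound (c) already gives
`I ≪ L^{-2/15+ε}`. Otherwise Lemma 3 (d) makes `M_k(f) ≪ L^{2ε-4/15}` (the power of `log log k`
is absorbed into `L^ε`), and Holowinsky's bound (a) together with (b) gives
`I ≪ L^ε · L^{ε-2/15} · L^ε`. The threshold `13/15` is where the two bounds meet.
-/

open Real Filter

lemma eventually_log_rpow_le_rpow (a : ℝ) {b : ℝ} (hb : 0 < b) :
    ∀ᶠ x : ℝ in atTop, log x ^ a ≤ x ^ b := by
  filter_upwards [(isLittleO_log_rpow_rpow_atTop a hb).bound one_pos, eventually_ge_atTop 0]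
    with x hx hx0
  rw [one_mul, norm_of_nonneg (rpow_nonneg hx0 b)] at hx
  exact (le_abs_self _).trans hx

lemma eventually_one_le_log_and_log_log_rpow_le {ε : ℝ} (hε : 0 < ε) :
    ∀ᶠ k : ℕ in atTop, 1 ≤ log k ∧ log (log k) ^ ((9 : ℝ) / 2) ≤ log k ^ (2 * ε) := by
  have hlog : Tendsto (fun k : ℕ => log k) atTop atTop :=
    tendsto_log_atTop.comp tendsto_natCast_atTop_atTop
  exact (hlog.eventually_ge_atTop 1).and
    (hlog.eventually (eventually_log_rpow_le_rpow _ (by positivity)))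

lemma le_mul_rpow_add_of_le_div {L x c I a b : ℝ} (hL : 0 < L) (hc : 0 ≤ c)
    (hx : L ^ (-b) ≤ x) (hI : I ≤ c * L ^ a / x) : I ≤ c * L ^ (a + b) :=
  calc I ≤ c * L ^ a / x := hI
    _ ≤ c * L ^ a / L ^ (-b) := by gcongr
    _ = c * L ^ (a + b) := by rw [mul_div_assoc, ← rpow_sub hL, sub_neg_eq_add]

lemma sqrt_le_of_le_mul_sqrt_of_le_rpow {L ε C M x : ℝ} (hL : 1 ≤ L) (hC : 0 ≤ C)
    (hlog : log L ^ ((9 : ℝ) / 2) ≤ L ^ (2 * ε)) (hx : x ≤ L ^ (-(13 : ℝ) / 15))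
    (hM : M ≤ C * L ^ ((1 : ℝ) / 6) * log L ^ ((9 : ℝ) / 2) * √x) :
    √M ≤ √C * L ^ (ε - 2 / 15) := by
  have hL0 : 0 < L := one_pos.trans_le hL
  have hsqrt : √(L ^ (-(13 : ℝ) / 15)) = L ^ (-(13 : ℝ) / 30) := by
    rw [sqrt_eq_rpow, ← rpow_mul hL0.le]; norm_num
  have hsq :
      (L ^ (ε - 2 / 15)) ^ 2 = L ^ ((1 : ℝ) / 6) * L ^ (2 * ε) * L ^ (-(13 : ℝ) / 30) := by
    rw [← rpow_natCast, ← rpow_mul hL0.le, ← rpow_add hL0, ← rpow_add hL0]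
    congr 1
    push_cast
    ring
  have hM' : M ≤ C * (L ^ (ε - 2 / 15)) ^ 2 :=
    calc M ≤ C * L ^ ((1 : ℝ) / 6) * log L ^ ((9 : ℝ) / 2) * √x := hM
      _ ≤ C * L ^ ((1 : ℝ) / 6) * L ^ (2 * ε) * √(L ^ (-(13 : ℝ) / 15)) := by gcongr
      _ = C * (L ^ (ε - 2 / 15)) ^ 2 := by rw [hsqrt, hsq]; ring
  calc √M ≤ √(C * (L ^ (ε - 2 / 15)) ^ 2) := sqrt_le_sqrt hM'
    _ = √C * L ^ (ε - 2 / 15) := by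
      rw [sqrt_mul' _ (sq_nonneg _), sqrt_sq (rpow_nonneg hL0.le _)]

lemma le_mul_rpow_of_holowinsky_bounds {L ε C₀ C₁ C₃ I M R L₁ : ℝ} (hL : 1 ≤ L) (hε : 0 ≤ ε)
    (hC₁ : 0 ≤ C₁) (hC₃ : 0 ≤ C₃) (hR : 0 ≤ R)
    (hlog : log L ^ ((9 : ℝ) / 2) ≤ L ^ (2 * ε)) (hL₁ : L₁ ≤ L ^ (-(13 : ℝ) / 15))
    (ha : I ≤ C₁ * L ^ ε * √M * (1 + R)) (hb : R ≤ C₀ * L ^ ε)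
    (hd : M ≤ C₃ * L ^ ((1 : ℝ) / 6) * log L ^ ((9 : ℝ) / 2) * √L₁) :
    I ≤ C₁ * √C₃ * (1 + C₀) * L ^ (-(2 : ℝ) / 15 + 3 * ε) := by
  have hL0 : 0 < L := one_pos.trans_le hL
  have hM := sqrt_le_of_le_mul_sqrt_of_le_rpow hL hC₃ hlog hL₁ hd
  have hR' : 1 + R ≤ (1 + C₀) * L ^ ε := by
    have := one_le_rpow hL hε
    linarith
  calc I ≤ C₁ * L ^ ε * √M * (1 + R) := ha
    _ ≤ C₁ * L ^ ε * (√C₃ * L ^ (ε - 2 / 15)) * ((1 + C₀) * L ^ ε) := by gcongr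
    _ = C₁ * √C₃ * (1 + C₀) * L ^ (ε + ((ε - 2 / 15) + ε)) := by
      rw [rpow_add hL0, rpow_add hL0]; ring
    _ = C₁ * √C₃ * (1 + C₀) * L ^ (-(2 : ℝ) / 15 + 3 * ε) := by ring_nf

lemma le_max_mul_rpow_of_holowinsky_soundararajan_bounds {L ε C₀ C₁ C₂ C₃ I M R L₁ : ℝ}
    (hL : 1 ≤ L) (hε : 0 ≤ ε) (hC₁ : 0 ≤ C₁) (hC₂ : 0 ≤ C₂) (hC₃ : 0 ≤ C₃) (hR : 0 ≤ R)
    (hlog : log L ^ ((9 : ℝ) / 2) ≤ L ^ (2 * ε))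
    (ha : I ≤ C₁ * L ^ ε * √M * (1 + R)) (hb : R ≤ C₀ * L ^ ε)
    (hc : I ≤ C₂ * L ^ (-(1 : ℝ) + ε) / L₁)
    (hd : M ≤ C₃ * L ^ ((1 : ℝ) / 6) * log L ^ ((9 : ℝ) / 2) * √L₁) :
    I ≤ max C₂ (C₁ * √C₃ * (1 + C₀)) * L ^ (-(2 : ℝ) / 15 + 3 * ε) := by
  have hL0 : 0 < L := one_pos.trans_le hL
  rcases le_or_gt (L ^ (-(13 : ℝ) / 15)) L₁ with hL₁ | hL₁
  · calc I ≤ C₂ * L ^ (-(1 : ℝ) + ε + 13 / 15) :=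
          le_mul_rpow_add_of_le_div hL0 hC₂ (by rwa [neg_div] at hL₁) hc
      _ ≤ C₂ * L ^ (-(2 : ℝ) / 15 + 3 * ε) := by gcongr C₂ * L ^ ?_; linarith
      _ ≤ _ := by gcongr; exact le_max_left _ _
  · calc I ≤ C₁ * √C₃ * (1 + C₀) * L ^ (-(2 : ℝ) / 15 + 3 * ε) :=
          le_mul_rpow_of_holowinsky_bounds hL hε hC₁ hC₃ hR hlog hL₁.le ha hb hd
      _ ≤ _ := by gcongr; exact le_max_right _ _

theorem deduce_theorem_one_ii_general (ε C₀ C₁ C₂ C₃ : ℝ) (hε : 0 < ε)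
    (hC₁ : 0 < C₁) (hC₂ : 0 < C₂) (hC₃ : 0 < C₃) :
    ∃ C : ℝ, ∃ k₀ : ℕ, ∀ k : ℕ, k₀ ≤ k → ∀ I M R L₁ : ℝ,
      0 ≤ I → 0 ≤ M → 0 ≤ R → 0 < L₁ →
      I ≤ C₁ * (Real.log k) ^ ε * M ^ ((1 : ℝ) / 2) * (1 + R) →
      R ≤ C₀ * (Real.log k) ^ ε →
      I ≤ C₂ * (Real.log k) ^ (-(1 : ℝ) + ε) / L₁ →
      M ≤ C₃ * (Real.log k) ^ ((1 : ℝ) / 6) *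
            (Real.log (Real.log k)) ^ ((9 : ℝ) / 2) * L₁ ^ ((1 : ℝ) / 2) →
      I ≤ C * (Real.log k) ^ (-(2 : ℝ) / 15 + 3 * ε) := by
  obtain ⟨k₀, hk₀⟩ := eventually_atTop.mp (eventually_one_le_log_and_log_log_rpow_le hε)
  refine ⟨max C₂ (C₁ * √C₃ * (1 + C₀)), k₀, fun k hk I M R L₁ _ _ hR _ ha hb hc hd => ?_⟩
  obtain ⟨hL, hlog⟩ := hk₀ k hk
  rw [← sqrt_eq_rpow] at ha hd
  exact le_max_mul_rpow_of_holowinsky_soundararajan_bounds hL hε.le hC₁.le hC₂.le hC₃.le hR hlog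
    ha hb hc hd

/-- Deduction of Theorem 1(ii) of Holowinsky–Soundararajan from
Holowinsky's Theorem 2(ii) (hypothesis (a)), Lemma 1 (hypothesis (b)),
Soundararajan's Theorem 3(ii) (hypothesis (c)) and Lemma 3 (hypothesis (d)):
`I ≤ C (log k)^{−2/15+3ε}`. -/
theorem deduce_theorem_one_ii (ε C₀ C₁ C₂ C₃ : ℝ) (hε : 0 < ε) (hε' : ε ≤ 1 / 100)
    (hC₀ : 0 < C₀) (hC₁ : 0 < C₁) (hC₂ : 0 < C₂) (hC₃ : 0 < C₃) :
    ∃ C : ℝ, ∃ k₀ : ℕ, ∀ k : ℕ, k₀ ≤ k → ∀ I M R L₁ : ℝ,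
      0 ≤ I → 0 ≤ M → 0 ≤ R → 0 < L₁ →
      I ≤ C₁ * (Real.log k) ^ ε * M ^ ((1 : ℝ) / 2) * (1 + R) →
      R ≤ C₀ * (Real.log k) ^ ε →
      I ≤ C₂ * (Real.log k) ^ (-(1 : ℝ) + ε) / L₁ →
      M ≤ C₃ * (Real.log k) ^ ((1 : ℝ) / 6) *
            (Real.log (Real.log k)) ^ ((9 : ℝ) / 2) * L₁ ^ ((1 : ℝ) / 2) →
      I ≤ C * (Real.log k) ^ (-(2 : ℝ) / 15 + 3 * ε) :=
  deduce_theorem_one_ii_general ε C₀ C₁ C₂ C₃ hε hC₁ hC₂ hC₃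
end
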